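/- arXiv:2312.01337 — 2 statements merged into one kernel-verified Lean document; each statement's English description precedes it below -/
import Mathlib

section
/- If R: V → G is a relative Rota-Baxter operator of weight 0, then T(v) = Φ(R(v)⁻¹)v defines a T-structure on V, i.e., T is a bijection of V satisfying T(kv) = k·Tᵏ(v) for all v ∈ V and k ∈ ℤ. -/
/-!
For a relative Rota–Baxter operator `R`, the identity `R u * R (R u⁻¹ • x) = R (u + x)` shows
that the maps `S k : v ↦ R (k • v)⁻¹ • v` satisfy `S j ∘ S k = S (j + k)` and `S 0 = id`, so
`k ↦ S k` is an action of `ℤ` on `V` by permutations. Hence `T = S 1` is a permutation with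
`T ^ k = S k`, and `T (k • v) = R (k • v)⁻¹ • (k • v) = k • S k v` since `G` acts additively.
-/

def IsRelativeRotaBaxter {G V : Type*} [Group G] [AddGroup V] [DistribMulAction G V]
    (R : V → G) : Prop :=
  ∀ u v : V, R u * R v = R (u + R u • v)

def IsTStructure {A : Type*} [AddGroup A] (T : Equiv.Perm A) : Prop :=
  ∀ (a : A) (k : ℤ), T (k • a) = k • (T ^ k) a

section RotaBaxter

variable {G V : Type*} [Group G] [AddGroup V] [DistribMulAction G V]

def rotaBaxterIterate (R : V → G) (k : ℤ) (v : V) : V :=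
  (R (k • v))⁻¹ • v

namespace IsRelativeRotaBaxter

variable {R : V → G} (hR : IsRelativeRotaBaxter R)
include hR

theorem map_zero : R 0 = 1 := by
  have h := hR 0 0
  rw [smul_zero, add_zero] at h
  exact mul_eq_left.mp h

theorem map_inv_smul (u x : V) : R ((R u)⁻¹ • x) = (R u)⁻¹ * R (u + x) := by
  refine eq_inv_mul_of_mul_eq ?_
  rw [hR, smul_inv_smul]

theorem rotaBaxterIterate_zero : rotaBaxterIterate R 0 = id := by
  funext v
  simp only [rotaBaxterIterate, zero_smul, hR.map_zero, inv_one, one_smul, id]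

theorem rotaBaxterIterate_add (j k : ℤ) (v : V) :
    rotaBaxterIterate R (j + k) v = rotaBaxterIterate R j (rotaBaxterIterate R k v) := by
  simp only [rotaBaxterIterate, smul_comm j, hR.map_inv_smul, mul_inv_rev, inv_inv, mul_smul,
    smul_inv_smul, ← add_zsmul, add_comm k j]

def permHom : Multiplicative ℤ →* Equiv.Perm V where
  toFun k :=
    { toFun := rotaBaxterIterate R k.toAdd
      invFun := rotaBaxterIterate R (-k.toAdd)
      left_inv v := by
        rw [← hR.rotaBaxterIterate_add, neg_add_cancel, hR.rotaBaxterIterate_zero, id]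
      right_inv v := by
        rw [← hR.rotaBaxterIterate_add, add_neg_cancel, hR.rotaBaxterIterate_zero, id] }
  map_one' := by ext v; simp [hR.rotaBaxterIterate_zero]
  map_mul' j k := by ext v; exact hR.rotaBaxterIterate_add j.toAdd k.toAdd v

theorem permHom_apply (k : Multiplicative ℤ) (v : V) :
    hR.permHom k v = rotaBaxterIterate R k.toAdd v :=
  rfl

theorem permHom_ofAdd_one_zpow (k : ℤ) :
    hR.permHom (Multiplicative.ofAdd 1) ^ k = hR.permHom (Multiplicative.ofAdd k) := by
  rw [← map_zpow, ← ofAdd_zsmul, zsmul_one, Int.cast_id]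

theorem permHom_ofAdd_one_apply (v : V) :
    hR.permHom (Multiplicative.ofAdd 1) v = (R v)⁻¹ • v := by
  rw [permHom_apply, toAdd_ofAdd, rotaBaxterIterate, one_zsmul]

theorem isTStructure_permHom_ofAdd_one : IsTStructure (hR.permHom (Multiplicative.ofAdd 1)) := by
  intro v k
  rw [hR.permHom_ofAdd_one_apply, hR.permHom_ofAdd_one_zpow, permHom_apply, toAdd_ofAdd,
    rotaBaxterIterate, smul_comm]

end IsRelativeRotaBaxter

end RotaBaxter

abbrev MonoidHom.toDistribMulAction {G V : Type*} [Monoid G] [AddMonoid V]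
    (Φ : G →* Multiplicative (AddAut V)) : DistribMulAction G V where
  smul g v := Multiplicative.toAdd (Φ g) v
  one_smul v := congr($(map_one Φ).toAdd v)
  mul_smul g h v := congr($(map_mul Φ g h).toAdd v)
  smul_zero _ := map_zero _
  smul_add _ := map_add _

theorem rrb_T_structure {G V : Type*} [Group G] [AddCommGroup V]
    (Φ : G →* Multiplicative (AddAut V)) (R : V → G)
    (hR : ∀ u v : V, R u * R v = R (u + Multiplicative.toAdd (Φ (R u)) v)) :
    ∃ T : Equiv.Perm V, (∀ v : V, T v = Multiplicative.toAdd (Φ ((R v)⁻¹)) v) ∧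
      ∀ (v : V) (k : ℤ), T (k • v) = k • ((T ^ k) v) := by
  let _ : DistribMulAction G V := Φ.toDistribMulAction
  have hRB : IsRelativeRotaBaxter R := hR
  exact ⟨hRB.permHom (Multiplicative.ofAdd 1), hRB.permHom_ofAdd_one_apply,
    hRB.isTStructure_permHom_ofAdd_one⟩
end

section
/- If R: V → G is a relative Rota-Baxter operator of weight 0, then for all v ∈ V and m, n ∈ ℕ, Φ(R(nv)⁻¹)(mv) = m·Tⁿ(v), where T(v) = Φ(R(v)⁻¹)v. -/
/-!
Write `g • v` for `Φ(g) v` and `T v = R(v)⁻¹ • v`. By linearity of `Φ(R(n v))⁻¹` it suffices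
to treat `m = 1`, i.e. to show `R(n v)⁻¹ • v = Tⁿ v`. Granting this for `n`, we have
`R(n v) • Tⁿ v = v`, so the Rota–Baxter identity gives `R(n v) R(Tⁿ v) = R(n v + v)`; inverting,
`R((n+1) v)⁻¹ • v = R(Tⁿ v)⁻¹ • Tⁿ v = Tⁿ⁺¹ v`.
-/

namespace RelativeRotaBaxter

variable {G V : Type*} [Group G] [AddCommGroup V] {Φ : G →* Multiplicative (AddAut V)}
  {R : V → G}

theorem map_zero_eq_one
    (hR : ∀ u v : V, R u * R v = R (u + Multiplicative.toAdd (Φ (R u)) v)) : R 0 = 1 := by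
  simpa using hR 0 0

theorem inv_apply_nsmul_self
    (hR : ∀ u v : V, R u * R v = R (u + Multiplicative.toAdd (Φ (R u)) v)) (v : V) (n : ℕ) :
    Multiplicative.toAdd (Φ (R (n • v))⁻¹) v =
      (fun w => Multiplicative.toAdd (Φ (R w)⁻¹) w)^[n] v := by
  induction n with
  | zero => simp [map_zero_eq_one hR]
  | succ n ih =>
    set T : V → V := fun w => Multiplicative.toAdd (Φ (R w)⁻¹) w
    have hsplit : R ((n + 1) • v) = R (n • v) * R (T^[n] v) := by
      rw [hR, ← ih, map_inv, toAdd_inv, AddAut.neg_apply, AddEquiv.apply_symm_apply, succ_nsmul]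
    rw [hsplit, mul_inv_rev, map_mul, Function.iterate_succ_apply', ← ih]
    rfl

end RelativeRotaBaxter

theorem rrb_T_iterate {G V : Type*} [Group G] [AddCommGroup V]
    (Φ : G →* Multiplicative (AddAut V)) (R : V → G)
    (hR : ∀ u v : V, R u * R v = R (u + Multiplicative.toAdd (Φ (R u)) v)) :
    ∀ (v : V) (m n : ℕ),
      Multiplicative.toAdd (Φ ((R (n • v))⁻¹)) (m • v) = m • ((fun w => Multiplicative.toAdd (Φ ((R w)⁻¹)) w)^[n] v) := by
  intro v m n
  rw [map_nsmul, RelativeRotaBaxter.inv_apply_nsmul_self hR]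
end
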